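/- Among all solutions X of the minimization of Tr(DX) over 0 ⪯ X ⪯ I_n, the projection P⁻ onto the negative eigenspace of D is the unique solution of minimal rank. -/

import Mathlib

open Matrix BigOperators

/-- Orthogonal projection onto the span of eigenvectors of `D` with negative eigenvalues. -/
noncomputable def projNeg {n : ℕ} {D : Matrix (Fin n) (Fin n) ℝ} (hD : D.IsHermitian) :
    Matrix (Fin n) (Fin n) ℝ :=
  (hD.eigenvectorUnitary : Matrix (Fin n) (Fin n) ℝ) *
    (Matrix.diagonal fun i => if hD.eigenvalues i < 0 then (1 : ℝ) else 0) *
    (star (hD.eigenvectorUnitary : Matrix (Fin n) (Fin n) ℝ))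

section helpers

variable {n : ℕ}

private lemma psd_diag_nonneg {A : Matrix (Fin n) (Fin n) ℝ} (hA : A.PosSemidef) (i : Fin n) :
    0 ≤ A i i := by
  have := hA.dotProduct_mulVec_nonneg (Pi.single i 1)
  simpa [Matrix.mulVec_single, dotProduct, Pi.single_apply, Finset.sum_ite_eq] using this

private lemma herm_symm {A : Matrix (Fin n) (Fin n) ℝ} (hA : A.IsHermitian) (i j : Fin n) :
    A j i = A i j := by
  have := congrFun (congrFun hA i) j
  simpa using this

private lemma psd_row_zero {A : Matrix (Fin n) (Fin n) ℝ} (hA : A.PosSemidef) {i : Fin n}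
    (h : A i i = 0) (j : Fin n) : A i j = 0 := by
  have h0 : star (Pi.single i (1:ℝ)) ⬝ᵥ A *ᵥ Pi.single i 1 = 0 := by
    simpa [Matrix.mulVec_single, dotProduct, Pi.single_apply, Finset.sum_ite_eq] using h
  have hv : A *ᵥ Pi.single i 1 = 0 := (hA.dotProduct_mulVec_zero_iff _).mp h0
  have hcol : A j i = 0 := by
    have := congrFun hv j
    simpa [Matrix.mulVec_single] using this
  rw [← herm_symm hA.1 i j]
  exact hcol

private lemma conj_cancel {U M : Matrix (Fin n) (Fin n) ℝ} (h1 : star U * U = 1) :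
    star U * (U * M * star U) * U = M := by
  calc star U * (U * M * star U) * U = (star U * U) * M * (star U * U) := by
        simp only [Matrix.mul_assoc]
    _ = M := by rw [h1, Matrix.one_mul, Matrix.mul_one]

private lemma conj_cancel' {U M : Matrix (Fin n) (Fin n) ℝ} (h2 : U * star U = 1) :
    U * (star U * M * U) * star U = M := by
  calc U * (star U * M * U) * star U = (U * star U) * M * (U * star U) := by
        simp only [Matrix.mul_assoc]
    _ = M := by rw [h2, Matrix.one_mul, Matrix.mul_one]

/-- key trace formula : Tr(D Y) = ∑ λᵢ (U* Y U)ᵢᵢ -/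
private lemma trace_mul_eq_sum {D : Matrix (Fin n) (Fin n) ℝ} (hD : D.IsHermitian)
    (Y : Matrix (Fin n) (Fin n) ℝ) :
    (D * Y).trace = ∑ i, hD.eigenvalues i *
      ((star (hD.eigenvectorUnitary : Matrix (Fin n) (Fin n) ℝ) * Y *
        (hD.eigenvectorUnitary : Matrix (Fin n) (Fin n) ℝ)) i i) := by
  set U := (hD.eigenvectorUnitary : Matrix (Fin n) (Fin n) ℝ) with hU
  have hspec : D = U * Matrix.diagonal hD.eigenvalues * star U := by
    simpa using hD.spectral_theorem
  calc (D * Y).trace = ((U * Matrix.diagonal hD.eigenvalues * star U) * Y).trace := by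
        conv_lhs => rw [hspec]
    _ = (U * (Matrix.diagonal hD.eigenvalues * (star U * Y))).trace := by
        simp only [Matrix.mul_assoc]
    _ = ((Matrix.diagonal hD.eigenvalues * (star U * Y)) * U).trace := Matrix.trace_mul_comm _ _
    _ = (Matrix.diagonal hD.eigenvalues * (star U * Y * U)).trace := by
        simp only [Matrix.mul_assoc]
    _ = ∑ i, hD.eigenvalues i * ((star U * Y * U) i i) := by
        simp [Matrix.trace, Matrix.diagonal_mul, Matrix.diag]

private lemma ker_le_of_psd_le {A B : Matrix (Fin n) (Fin n) ℝ} (hA : A.PosSemidef)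
    (hBA : (B - A).PosSemidef) :
    LinearMap.ker B.mulVecLin ≤ LinearMap.ker A.mulVecLin := by
  intro x hx
  rw [LinearMap.mem_ker, Matrix.mulVecLin_apply] at hx ⊢
  have h1 := hBA.dotProduct_mulVec_nonneg x
  rw [Matrix.sub_mulVec, dotProduct_sub, hx, dotProduct_zero] at h1
  have h2 := hA.dotProduct_mulVec_nonneg x
  have h0 : star x ⬝ᵥ A *ᵥ x = 0 := le_antisymm (by linarith) h2
  exact (hA.dotProduct_mulVec_zero_iff x).mp h0

private lemma rank_le_of_ker_le {A B : Matrix (Fin n) (Fin n) ℝ}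
    (h : LinearMap.ker B.mulVecLin ≤ LinearMap.ker A.mulVecLin) : A.rank ≤ B.rank := by
  have hA := A.mulVecLin.finrank_range_add_finrank_ker
  have hB := B.mulVecLin.finrank_range_add_finrank_ker
  have hk := Submodule.finrank_mono h
  rw [Matrix.rank, Matrix.rank]
  omega

end helpers

/-- among the minimizers of `Tr(DX)` over `0 ⪯ X ⪯ I`, the projection `P⁻` onto
the negative eigenspace of `D` is the unique solution of minimal rank. -/
theorem stmt1 {n : ℕ} (D : Matrix (Fin n) (Fin n) ℝ) (hD : D.IsHermitian) :
    ((projNeg hD).PosSemidef ∧ (1 - projNeg hD).PosSemidef ∧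
      (∀ Y : Matrix (Fin n) (Fin n) ℝ, Y.PosSemidef → (1 - Y).PosSemidef →
        (D * projNeg hD).trace ≤ (D * Y).trace)) ∧
    ∀ X : Matrix (Fin n) (Fin n) ℝ, X.PosSemidef → (1 - X).PosSemidef →
      (∀ Y : Matrix (Fin n) (Fin n) ℝ, Y.PosSemidef → (1 - Y).PosSemidef →
        (D * X).trace ≤ (D * Y).trace) →
      ((projNeg hD).rank ≤ X.rank ∧ (X.rank = (projNeg hD).rank → X = projNeg hD)) := by
  classical
  set U : Matrix (Fin n) (Fin n) ℝ := (hD.eigenvectorUnitary : Matrix (Fin n) (Fin n) ℝ) with hUdef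
  set μ : Fin n → ℝ := hD.eigenvalues with hμdef
  have hU1 : star U * U = 1 := Matrix.mem_unitaryGroup_iff'.mp hD.eigenvectorUnitary.2
  have hU2 : U * star U = 1 := Matrix.mem_unitaryGroup_iff.mp hD.eigenvectorUnitary.2
  set d : Fin n → ℝ := fun i => if μ i < 0 then (1 : ℝ) else 0 with hddef
  set Q : Matrix (Fin n) (Fin n) ℝ := Matrix.diagonal d with hQdef
  have hProj : projNeg hD = U * Q * star U := rfl
  -- basic PSD facts
  have hQpsd : Q.PosSemidef := Matrix.PosSemidef.diagonal (fun i => by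
    simp only [hddef]; split <;> norm_num)
  have hPpsd : (projNeg hD).PosSemidef := by
    rw [hProj]
    have := hQpsd.mul_mul_conjTranspose_same U
    rwa [Matrix.star_eq_conjTranspose]
  have honeminus : 1 - projNeg hD = U * (1 - Q) * star U := by
    rw [hProj, Matrix.mul_sub, Matrix.mul_one, Matrix.sub_mul, hU2]
  have h1Qpsd : (1 - Q).PosSemidef := by
    have : (1 : Matrix (Fin n) (Fin n) ℝ) - Q = Matrix.diagonal (fun i => 1 - d i) := by
      rw [hQdef, ← Matrix.diagonal_one, Matrix.diagonal_sub]
    rw [this]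
    exact Matrix.PosSemidef.diagonal (fun i => by
      simp only [hddef]; split <;> norm_num)
  have h1Ppsd : (1 - projNeg hD).PosSemidef := by
    rw [honeminus]
    have := h1Qpsd.mul_mul_conjTranspose_same U
    rwa [Matrix.star_eq_conjTranspose]
  -- conjugated matrix facts
  have hQconj : star U * projNeg hD * U = Q := by
    rw [hProj]; exact conj_cancel hU1
  have htraceP : (D * projNeg hD).trace = ∑ i, (if μ i < 0 then μ i else 0) := by
    rw [trace_mul_eq_sum hD]
    refine Finset.sum_congr rfl fun i _ => ?_
    rw [show (star (hD.eigenvectorUnitary : Matrix (Fin n) (Fin n) ℝ) * projNeg hD *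
      (hD.eigenvectorUnitary : Matrix (Fin n) (Fin n) ℝ)) = Q from hQconj]
    simp only [hQdef, Matrix.diagonal_apply_eq, hddef]
    split <;> simp [hμdef]
  -- part 1 minimality: for any feasible Y
  have hmin1 : ∀ Y : Matrix (Fin n) (Fin n) ℝ, Y.PosSemidef → (1 - Y).PosSemidef →
      (D * projNeg hD).trace ≤ (D * Y).trace := by
    intro Y hY h1Y
    rw [htraceP, trace_mul_eq_sum hD]
    apply Finset.sum_le_sum
    intro i _
    set M := star U * Y * U with hMdef
    have hMpsd : M.PosSemidef := by
      have := hY.conjTranspose_mul_mul_same U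
      rwa [← Matrix.star_eq_conjTranspose] at this
    have h1M : (1 - M).PosSemidef := by
      have h : star U * (1 - Y) * U = 1 - M := by
        rw [Matrix.mul_sub, Matrix.mul_one, Matrix.sub_mul, hU1, hMdef]
      have := h1Y.conjTranspose_mul_mul_same U
      rw [← Matrix.star_eq_conjTranspose] at this
      rwa [h] at this
    have hlo : 0 ≤ M i i := psd_diag_nonneg hMpsd i
    have hhi : M i i ≤ 1 := by
      have := psd_diag_nonneg h1M i
      have h1 : (1 : Matrix (Fin n) (Fin n) ℝ) i i = 1 := Matrix.one_apply_eq i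
      simp only [Matrix.sub_apply, h1] at this
      linarith
    by_cases hneg : μ i < 0
    · simp only [if_pos hneg]
      nlinarith
    · simp only [if_neg hneg]
      push_neg at hneg
      positivity
  refine ⟨⟨hPpsd, h1Ppsd, hmin1⟩, ?_⟩
  -- part 2
  intro X hX h1X hminX
  set M : Matrix (Fin n) (Fin n) ℝ := star U * X * U with hMdef
  have hXM : U * M * star U = X := by rw [hMdef]; exact conj_cancel' hU2
  have hMpsd : M.PosSemidef := by
    have := hX.conjTranspose_mul_mul_same U
    rwa [← Matrix.star_eq_conjTranspose] at this
  have h1M : (1 - M).PosSemidef := by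
    have h : star U * (1 - X) * U = 1 - M := by
      rw [Matrix.mul_sub, Matrix.mul_one, Matrix.sub_mul, hU1, hMdef]
    have := h1X.conjTranspose_mul_mul_same U
    rw [← Matrix.star_eq_conjTranspose] at this
    rwa [h] at this
  -- trace equality
  have htrX : (D * X).trace = ∑ i, μ i * M i i := trace_mul_eq_sum hD X
  have heq : ∑ i, (if μ i < 0 then μ i else 0) = ∑ i, μ i * M i i := by
    have h1 := hminX (projNeg hD) hPpsd h1Ppsd
    have h2 := hmin1 X hX h1X
    rw [htraceP] at h1 h2
    rw [htrX] at h1 h2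
    linarith
  -- termwise equality
  have hterm : ∀ i : Fin n, (if μ i < 0 then μ i else 0) = μ i * M i i := by
    have hle : ∀ i ∈ Finset.univ, (if μ i < 0 then μ i else 0) ≤ μ i * M i i := by
      intro i _
      have hlo : 0 ≤ M i i := psd_diag_nonneg hMpsd i
      have hhi : M i i ≤ 1 := by
        have := psd_diag_nonneg h1M i
        simp only [Matrix.sub_apply, Matrix.one_apply_eq] at this
        linarith
      by_cases hneg : μ i < 0
      · simp only [if_pos hneg]; nlinarith
      · simp only [if_neg hneg]; push_neg at hneg; positivity
    intro i
    exact (Finset.sum_eq_sum_iff_of_le hle).mp heq i (Finset.mem_univ i)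
  -- diagonal consequences
  have hdiag1 : ∀ i, μ i < 0 → M i i = 1 := by
    intro i hi
    have := hterm i
    rw [if_pos hi] at this
    have hne : μ i ≠ 0 := ne_of_lt hi
    have h2 : μ i * 1 = μ i * M i i := by linarith
    exact (mul_left_cancel₀ hne h2).symm
  have hdiag0 : ∀ i, 0 < μ i → M i i = 0 := by
    intro i hi
    have := hterm i
    rw [if_neg (not_lt.mpr (le_of_lt hi))] at this
    have hne : μ i ≠ 0 := ne_of_gt hi
    exact (mul_eq_zero.mp this.symm).resolve_left hne
  -- row structure
  have hrowP : ∀ i, 0 < μ i → ∀ j, M i j = 0 := by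
    intro i hi j
    exact psd_row_zero hMpsd (hdiag0 i hi) j
  have hrowN : ∀ i, μ i < 0 → ∀ j, M i j = (if i = j then (1:ℝ) else 0) := by
    intro i hi j
    have hdz : (1 - M) i i = 0 := by
      simp only [Matrix.sub_apply, Matrix.one_apply_eq, hdiag1 i hi, sub_self]
    have := psd_row_zero h1M hdz j
    simp only [Matrix.sub_apply, Matrix.one_apply] at this
    by_cases h : i = j
    · simp only [if_pos h] at this ⊢; linarith
    · simp only [if_neg h] at this ⊢; linarith
  have hMsymm : ∀ i j, M j i = M i j := herm_symm hMpsd.1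
  -- the compression matrix
  set e : Fin n → ℝ := fun i => if μ i = 0 then (1:ℝ) else 0 with hedef
  set E : Matrix (Fin n) (Fin n) ℝ := Matrix.diagonal e with hEdef
  have hEherm : Eᴴ = E := by
    simp [hEdef, Matrix.diagonal_conjTranspose]
  have hEME : E * M * E = M - Q := by
    ext i j
    have happ : (E * M * E) i j = e i * M i j * e j := by
      rw [hEdef]; simp [Matrix.diagonal_mul, Matrix.mul_diagonal, mul_comm, mul_assoc, mul_left_comm]
    rw [happ]
    simp only [Matrix.sub_apply, hQdef, Matrix.diagonal_apply, hedef, hddef]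
    rcases lt_trichotomy (μ i) 0 with hi | hi | hi
    · -- i negative: row i of M is the identity row
      rw [hrowN i hi j]
      have h0 : ¬ μ i = 0 := ne_of_lt hi
      by_cases h : i = j
      · subst h; simp [ne_of_lt hi, hi]
      · simp [h, h0]
    · -- i zero
      have hmu : ¬ μ i < 0 := by rw [hi]; exact lt_irrefl 0
      rcases lt_trichotomy (μ j) 0 with hj | hj | hj
      · -- j negative
        have hij : i ≠ j := by intro h; rw [h] at hi; linarith
        have hji : ¬ (j = i) := fun h => hij h.symm
        have h1 : M i j = 0 := by rw [hMsymm j i, hrowN j hj i, if_neg hji]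
        have h2 : ¬ μ j = 0 := ne_of_lt hj
        simp [h1, h2, hij]
      · -- j zero
        simp [hi, hj, hmu]
      · -- j positive
        have h1 : M i j = 0 := by rw [hMsymm j i]; exact hrowP j hj i
        have hij : i ≠ j := by intro h; rw [h] at hi; linarith
        have h2 : ¬ μ j = 0 := ne_of_gt hj
        simp [h1, h2, hij]
    · -- i positive
      rw [hrowP i hi j]
      have h0 : ¬ μ i = 0 := ne_of_gt hi
      have h1 : ¬ μ i < 0 := not_lt.mpr (le_of_lt hi)
      simp [h0, h1]
  have hMQpsd : (M - Q).PosSemidef := by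
    rw [← hEME]
    have := hMpsd.conjTranspose_mul_mul_same E
    rwa [hEherm] at this
  have hXPpsd : (X - projNeg hD).PosSemidef := by
    have h : U * (M - Q) * star U = X - projNeg hD := by
      rw [Matrix.mul_sub, Matrix.sub_mul, hXM, hProj]
    rw [← h]
    have := hMQpsd.mul_mul_conjTranspose_same U
    rwa [Matrix.star_eq_conjTranspose]
  have hker : LinearMap.ker X.mulVecLin ≤ LinearMap.ker (projNeg hD).mulVecLin :=
    ker_le_of_psd_le hPpsd hXPpsd
  have hrankle : (projNeg hD).rank ≤ X.rank := rank_le_of_ker_le hker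
  refine ⟨hrankle, ?_⟩
  intro hrank
  -- kernels coincide
  have hkereq : LinearMap.ker X.mulVecLin = LinearMap.ker (projNeg hD).mulVecLin := by
    apply Submodule.eq_of_le_of_finrank_eq hker
    have hA := X.mulVecLin.finrank_range_add_finrank_ker
    have hB := (projNeg hD).mulVecLin.finrank_range_add_finrank_ker
    rw [Matrix.rank, Matrix.rank] at hrank
    omega
  -- columns of M at zero eigenvalues vanish
  have hcolZ : ∀ j, μ j = 0 → ∀ i, M i j = 0 := by
    intro j hj i
    have hPu : projNeg hD *ᵥ (U *ᵥ Pi.single j 1) = 0 := by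
      rw [Matrix.mulVec_mulVec, hProj, Matrix.mul_assoc, Matrix.mul_assoc, hU1, Matrix.mul_one]
      rw [← Matrix.mulVec_mulVec]
      have hQv : Q *ᵥ Pi.single j 1 = 0 := by
        ext k
        have hk : (Q *ᵥ Pi.single j 1) k = Q k j := by simp [Matrix.mulVec_single]
        rw [hk]
        simp only [hQdef, Matrix.diagonal_apply, hddef, Pi.zero_apply]
        by_cases h : k = j
        · subst h; simp [hj]
        · simp [h]
      rw [hQv, Matrix.mulVec_zero]
    have hmem : (U *ᵥ Pi.single j 1) ∈ LinearMap.ker (projNeg hD).mulVecLin := by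
      rw [LinearMap.mem_ker, Matrix.mulVecLin_apply]; exact hPu
    rw [← hkereq, LinearMap.mem_ker, Matrix.mulVecLin_apply] at hmem
    -- X *ᵥ U *ᵥ single = 0, so U *ᵥ (M *ᵥ single) = 0
    have hXU : X * U = U * M := by
      rw [← hXM, Matrix.mul_assoc, Matrix.mul_assoc, hU1, Matrix.mul_one]
    have h2 : U *ᵥ (M *ᵥ Pi.single j 1) = 0 := by
      rw [Matrix.mulVec_mulVec, ← hXU, ← Matrix.mulVec_mulVec]
      exact hmem
    have h3 : M *ᵥ Pi.single j 1 = 0 := by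
      have := congrArg (fun v => star U *ᵥ v) h2
      simpa [Matrix.mulVec_mulVec, hU1] using this
    have := congrFun h3 i
    simpa [Matrix.mulVec_single] using this
  -- M = Q
  have hMQ : M = Q := by
    ext i j
    simp only [hQdef, Matrix.diagonal_apply, hddef]
    rcases lt_trichotomy (μ i) 0 with hi | hi | hi
    · rw [hrowN i hi j]
      by_cases h : i = j
      · subst h; simp [ne_of_lt hi, hi]
      · simp [h]
    · have hmu : ¬ μ i < 0 := by rw [hi]; exact lt_irrefl 0
      rcases lt_trichotomy (μ j) 0 with hj | hj | hj
      · have hij : i ≠ j := by intro h; rw [h] at hi; linarith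
        have hji : ¬ (j = i) := fun h => hij h.symm
        have h1 : M i j = 0 := by rw [hMsymm j i, hrowN j hj i, if_neg hji]
        simp [h1, hij]
      · have h1 : M i j = 0 := hcolZ j hj i
        simp [h1, hmu]
      · have h1 : M i j = 0 := by rw [hMsymm j i]; exact hrowP j hj i
        have hij : i ≠ j := by intro h; rw [h] at hi; linarith
        simp [h1, hij]
    · rw [hrowP i hi j]
      have h1 : ¬ μ i < 0 := not_lt.mpr (le_of_lt hi)
      simp [h1]
  rw [← hXM, hMQ, ← hProj]
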